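/- For |q| < 1 and nonzero complex a, c, y, w, u, d with |a/(cd)| < 1 and all denominators nonzero: the series _5φ_4 with upper parameters yq, wq, uq, ywuq, d, lower parameters wuq, yuq, ywq, aq/c, base q and argument a/(cd), equals (1 - a/c)/(1 - a/(cd)) times the very-well-poised _7φ_6 with parameters ywu; q√(ywu), -q√(ywu), y, w, u, d over √(ywu), -√(ywu), yuq, wuq, ywq, a/c, base q, argument aq/(cd). Explicitly: Σ_{k=0}^∞ (yq,wq,uq,ywuq,d;q)_k / ((q, wuq, yuq, ywq, aq/c;q)_k) (a/cd)^k = [(1-a/c)/(1-a/cd)] Σ_{k=0}^∞ [(1-ywu q^{2k})/(1-ywu)] (ywu, y, w, u, d;q)_k / ((q, yuq, wuq, ywq, a/c;q)_k) (aq/cd)^k. -/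

import Mathlib

/-!
Write `A = a/c`, `Z = a/(cd)`, `S_k` for the terms of the `₅φ₄` and `R_k` for those of the
`₇φ₆`. Both `S_{k+1}` and `R_{k+1}` are `S_k` times a rational function of `x = q^k`, and the
elementary identity `vwp_factor_identity` relates the two rational functions. It gives
`(1 - A) R_{k+1} = V_{k+1} - V_k + (1 - Z) S_k` with `V_k = (1 - A q^k) S_k`, so the sum of the
`₇φ₆` telescopes: `(1 - A) ∑ R_k = (1 - Z) ∑ S_k`. The ratio `S_{k+1}/S_k` tends to `Z`, and
`‖Z‖ < 1` makes all series involved absolutely convergent.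
-/

open Finset

/-- The q-shifted factorial `(a;q)_k`. -/
noncomputable def qPoch (a q : ℂ) (k : ℕ) : ℂ := ∏ j ∈ Finset.range k, (1 - a * q ^ j)

open Filter Topology

theorem summable_norm_of_succ_eq_mul {R : Type*} [SeminormedRing R] {f g : ℕ → R} {z : R}
    (hf : ∀ k, f (k + 1) = g k * f k) (hg : Tendsto g atTop (𝓝 z)) (hz : ‖z‖ < 1) :
    Summable (‖f ·‖) := by
  obtain ⟨ρ, hzρ, hρ⟩ := exists_between hz
  refine summable_of_ratio_norm_eventually_le hρ ?_
  filter_upwards [hg.norm.eventually (gt_mem_nhds hzρ)] with k hk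
  rw [norm_norm, norm_norm, hf]
  exact (norm_mul_le _ _).trans (mul_le_mul_of_nonneg_right hk.le (norm_nonneg _))

theorem hasSum_of_succ_eq_sub_add {α : Type*} [AddCommGroup α] [TopologicalSpace α]
    [IsTopologicalAddGroup α] {r v s : ℕ → α} {σ : α} (hv : Summable v) (hs : HasSum s σ)
    (h0 : r 0 = v 0) (hr : ∀ k, r (k + 1) = v (k + 1) - v k + s k) : HasSum r σ := by
  obtain ⟨V, hV⟩ := hv
  have hV' : HasSum (fun k => v (k + 1)) (V - v 0) := by
    simpa using (hasSum_nat_add_iff' 1).mpr hV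
  rw [← hasSum_nat_add_iff' 1]
  convert (hV'.sub hV).add hs using 1 <;> simp [hr, h0, sub_eq_neg_add]

lemma qPoch_succ (a q : ℂ) (k : ℕ) : qPoch a q (k + 1) = qPoch a q k * (1 - a * q ^ k) :=
  prod_range_succ _ _

lemma qPoch_succ' (a q : ℂ) (k : ℕ) : qPoch a q (k + 1) = (1 - a) * qPoch (a * q) q k := by
  induction k with
  | zero => simp [qPoch]
  | succ n ih => rw [qPoch_succ, ih, qPoch_succ]; ring

lemma vwp_factor_identity (y w u t : ℂ) :
    (1 - y * t) * (1 - w * t) * (1 - u * t) * (1 - y * w * u * t) -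
        (1 - t) * (1 - w * u * t) * (1 - y * u * t) * (1 - y * w * t) =
      t * (1 - y * w * u * t ^ 2) * ((1 - y) * (1 - w) * (1 - u)) := by
  ring

section Ratio

variable (y w u d q A Z : ℂ)

noncomputable def phi54Ratio (x : ℂ) : ℂ :=
  Z * ((1 - y * q * x) * (1 - w * q * x) * (1 - u * q * x) * (1 - y * w * u * q * x) *
      (1 - d * x)) /
    ((1 - q * x) * (1 - w * u * q * x) * (1 - y * u * q * x) * (1 - y * w * q * x) *
      (1 - A * q * x))

noncomputable def vwpRatio (x : ℂ) : ℂ :=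
  Z * q * x * (1 - y * w * u * q ^ 2 * x ^ 2) * ((1 - y) * (1 - w) * (1 - u)) * (1 - d * x) /
    ((1 - q * x) * (1 - w * u * q * x) * (1 - y * u * q * x) * (1 - y * w * q * x) * (1 - A))

lemma tendsto_phi54Ratio : Tendsto (phi54Ratio y w u d q A Z) (𝓝 0) (𝓝 Z) := by
  have h : ContinuousAt (phi54Ratio y w u d q A Z) 0 := by
    unfold phi54Ratio
    exact ContinuousAt.div (by fun_prop) (by fun_prop) (by norm_num)
  simpa [phi54Ratio] using h.tendsto

lemma one_sub_mul_vwpRatio {x : ℂ} (hA : A = Z * d) (h1A : 1 - A ≠ 0)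
    (hden : (1 - q * x) * (1 - w * u * q * x) * (1 - y * u * q * x) * (1 - y * w * q * x) *
      (1 - A * q * x) ≠ 0) :
    (1 - A) * vwpRatio y w u d q A Z x =
      (1 - A * q * x) * phi54Ratio y w u d q A Z x - Z * (1 - d * x) := by
  unfold vwpRatio phi54Ratio
  -- With the common factor `Q` kept opaque, `field_simp` clears it using `hQ0` alone.
  set Q := (1 - q * x) * (1 - w * u * q * x) * (1 - y * u * q * x) * (1 - y * w * q * x) with hQ
  have hQ0 := left_ne_zero_of_mul hden
  have hAqx := right_ne_zero_of_mul hden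
  field_simp
  rw [hQ]
  subst hA
  linear_combination (-(Z * (1 - d * x))) * vwp_factor_identity y w u (q * x)

end Ratio

section Terms

variable (a c y w u d q : ℂ)

noncomputable def phi54Term (k : ℕ) : ℂ :=
  (qPoch (y * q) q k * qPoch (w * q) q k * qPoch (u * q) q k *
      qPoch (y * w * u * q) q k * qPoch d q k) /
    (qPoch q q k * qPoch (w * u * q) q k * qPoch (y * u * q) q k *
      qPoch (y * w * q) q k * qPoch (a * q / c) q k) * (a / (c * d)) ^ k

noncomputable def vwpTerm (k : ℕ) : ℂ :=
  (1 - y * w * u * q ^ (2 * k)) / (1 - y * w * u) *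
    ((qPoch (y * w * u) q k * qPoch y q k * qPoch w q k * qPoch u q k * qPoch d q k) /
      (qPoch q q k * qPoch (y * u * q) q k * qPoch (w * u * q) q k *
        qPoch (y * w * q) q k * qPoch (a / c) q k)) * (a * q / (c * d)) ^ k

lemma phi54Term_zero : phi54Term a c y w u d q 0 = 1 := by
  simp [phi54Term, qPoch]

lemma vwpTerm_zero (hywu : 1 - y * w * u ≠ 0) : vwpTerm a c y w u d q 0 = 1 := by
  simp [vwpTerm, qPoch, hywu]

lemma phi54Term_succ (k : ℕ) :
    phi54Term a c y w u d q (k + 1) =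
      phi54Ratio y w u d q (a / c) (a / (c * d)) (q ^ k) * phi54Term a c y w u d q k := by
  -- `ring` treats the inverse of a sum as an atom, so inverses are first split over the factors.
  simp only [phi54Term, phi54Ratio, qPoch_succ, mul_div_right_comm a q c,
    div_eq_mul_inv, mul_inv]
  ring

lemma vwpTerm_succ (hywu : 1 - y * w * u ≠ 0) (k : ℕ) :
    vwpTerm a c y w u d q (k + 1) =
      vwpRatio y w u d q (a / c) (a / (c * d)) (q ^ k) * phi54Term a c y w u d q k := by
  -- `ring` cannot cancel `1 - y * w * u`, so the cancelling pair is inserted on the right.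
  rw [← inv_mul_cancel_left₀ hywu
    (vwpRatio y w u d q (a / c) (a / (c * d)) (q ^ k) * phi54Term a c y w u d q k)]
  simp only [vwpTerm, phi54Term, vwpRatio, qPoch_succ' (y * w * u), qPoch_succ' y,
    qPoch_succ' w, qPoch_succ' u, qPoch_succ' (a / c), mul_div_right_comm a q c]
  simp only [qPoch_succ, div_eq_mul_inv, mul_inv]
  ring

lemma one_sub_mul_vwpTerm_succ (hc : c ≠ 0) (hd : d ≠ 0) (hywu : 1 - y * w * u ≠ 0)
    (h1A : 1 - a / c ≠ 0) (k : ℕ)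
    (hden : qPoch q q (k + 1) * qPoch (w * u * q) q (k + 1) * qPoch (y * u * q) q (k + 1) *
      qPoch (y * w * q) q (k + 1) * qPoch (a * q / c) q (k + 1) ≠ 0) :
    (1 - a / c) * vwpTerm a c y w u d q (k + 1) =
      phi54Term a c y w u d q (k + 1) * (1 - a / c * q ^ (k + 1)) -
        phi54Term a c y w u d q k * (1 - a / c * q ^ k) +
          (1 - a / (c * d)) * phi54Term a c y w u d q k := by
  have hA : a / c = a / (c * d) * d := by field_simp
  have hratio : (1 - q * q ^ k) * (1 - w * u * q * q ^ k) * (1 - y * u * q * q ^ k) *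
      (1 - y * w * q * q ^ k) * (1 - a / c * q * q ^ k) ≠ 0 := by
    refine right_ne_zero_of_mul (a := qPoch q q k * qPoch (w * u * q) q k *
      qPoch (y * u * q) q k * qPoch (y * w * q) q k * qPoch (a * q / c) q k) ?_
    convert hden using 1
    simp only [qPoch_succ]
    ring
  rw [vwpTerm_succ a c y w u d q hywu, ← mul_assoc,
    one_sub_mul_vwpRatio y w u d q _ _ hA h1A hratio, phi54Term_succ]
  linear_combination (-q ^ k * phi54Term a c y w u d q k) * hA

lemma summable_norm_phi54Term (hq : ‖q‖ < 1) (hz : ‖a / (c * d)‖ < 1) :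
    Summable (‖phi54Term a c y w u d q ·‖) :=
  summable_norm_of_succ_eq_mul (phi54Term_succ a c y w u d q)
    ((tendsto_phi54Ratio y w u d q _ _).comp (tendsto_pow_atTop_nhds_zero_of_norm_lt_one hq)) hz

end Terms

theorem phi54_eq_vwp_phi76_general (a c y w u d q : ℂ)
    (hq : ‖q‖ < 1) (hz : ‖a / (c * d)‖ < 1)
    (hc : c ≠ 0) (hd : d ≠ 0)
    (hywu : 1 - y * w * u ≠ 0) (hacd : 1 - a / (c * d) ≠ 0)
    (hden : ∀ k : ℕ, qPoch q q k * qPoch (w * u * q) q k * qPoch (y * u * q) q k *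
      qPoch (y * w * q) q k * qPoch (a * q / c) q k ≠ 0)
    (hden' : ∀ k : ℕ, qPoch (a / c) q k ≠ 0) :
    ∑' k : ℕ,
        (qPoch (y * q) q k * qPoch (w * q) q k * qPoch (u * q) q k *
            qPoch (y * w * u * q) q k * qPoch d q k) /
          (qPoch q q k * qPoch (w * u * q) q k * qPoch (y * u * q) q k *
            qPoch (y * w * q) q k * qPoch (a * q / c) q k) * (a / (c * d)) ^ k =
      (1 - a / c) / (1 - a / (c * d)) *
        ∑' k : ℕ,
          (1 - y * w * u * q ^ (2 * k)) / (1 - y * w * u) *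
            ((qPoch (y * w * u) q k * qPoch y q k * qPoch w q k * qPoch u q k * qPoch d q k) /
              (qPoch q q k * qPoch (y * u * q) q k * qPoch (w * u * q) q k *
                qPoch (y * w * q) q k * qPoch (a / c) q k)) * (a * q / (c * d)) ^ k := by
  have h1A : 1 - a / c ≠ 0 := by simpa [qPoch] using hden' 1
  have hS := summable_norm_phi54Term a c y w u d q hq hz
  have hV : Summable fun k => phi54Term a c y w u d q k * (1 - a / c * q ^ k) :=
    hS.mul_tendsto_const (c := 1) <| by
      rw [Nat.cofinite_eq_atTop]
      simpa using ((tendsto_pow_atTop_nhds_zero_of_norm_lt_one hq).const_mul (a / c)).const_sub 1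
  have hsum : HasSum (fun k => (1 - a / c) * vwpTerm a c y w u d q k)
      ((1 - a / (c * d)) * ∑' k, phi54Term a c y w u d q k) :=
    hasSum_of_succ_eq_sub_add hV ((Summable.of_norm hS).hasSum.mul_left _)
      (by simp [phi54Term_zero, vwpTerm_zero _ _ _ _ _ _ _ hywu])
      (fun k => one_sub_mul_vwpTerm_succ a c y w u d q hc hd hywu h1A k (hden (k + 1)))
  have htsum := hsum.tsum_eq
  rw [tsum_mul_left] at htsum
  change ∑' k, phi54Term a c y w u d q k =
    (1 - a / c) / (1 - a / (c * d)) * ∑' k, vwpTerm a c y w u d q k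
  rw [div_mul_eq_mul_div, htsum, mul_div_cancel_left₀ _ hacd]

/-- Transformation between a `₅φ₄` and a very-well-poised `₇φ₆` series. -/
theorem phi54_eq_vwp_phi76 (a c y w u d q : ℂ)
    (hq : ‖q‖ < 1) (hz : ‖a / (c * d)‖ < 1)
    (hq0 : q ≠ 0) (ha : a ≠ 0) (hc : c ≠ 0) (hy : y ≠ 0) (hw : w ≠ 0) (hu : u ≠ 0) (hd : d ≠ 0)
    (hywu : 1 - y * w * u ≠ 0) (hacd : 1 - a / (c * d) ≠ 0)
    (hden : ∀ k : ℕ, qPoch q q k * qPoch (w * u * q) q k * qPoch (y * u * q) q k *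
      qPoch (y * w * q) q k * qPoch (a * q / c) q k ≠ 0)
    (hden' : ∀ k : ℕ, qPoch (a / c) q k ≠ 0) :
    ∑' k : ℕ,
        (qPoch (y * q) q k * qPoch (w * q) q k * qPoch (u * q) q k *
            qPoch (y * w * u * q) q k * qPoch d q k) /
          (qPoch q q k * qPoch (w * u * q) q k * qPoch (y * u * q) q k *
            qPoch (y * w * q) q k * qPoch (a * q / c) q k) * (a / (c * d)) ^ k =
      (1 - a / c) / (1 - a / (c * d)) *
        ∑' k : ℕ,
          (1 - y * w * u * q ^ (2 * k)) / (1 - y * w * u) *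
            ((qPoch (y * w * u) q k * qPoch y q k * qPoch w q k * qPoch u q k * qPoch d q k) /
              (qPoch q q k * qPoch (y * u * q) q k * qPoch (w * u * q) q k *
                qPoch (y * w * q) q k * qPoch (a / c) q k)) * (a * q / (c * d)) ^ k :=
  phi54_eq_vwp_phi76_general a c y w u d q hq hz hc hd hywu hacd hden hden'
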